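/- Let σ' be the automorphism of the curve E = V(x) ∪ V(x² − λyz) ⊂ P² (λ = (α³−1)/α) given by σ'(0:b:c) = (0:b:αc) on the line and σ'(a:b:c) = (a:αb:α⁻¹c) on the conic. Then for every i ≥ 1, the i-th iterate (σ')^i extends to an automorphism of P² (i.e. (σ')^i ∈ Aut_k(P², E)) if and only if α^{3i} = 1. Consequently the norm ‖σ'‖ equals the multiplicative order of α³. -/

import Mathlib

noncomputable section
open scoped Classical

/-- The automorphism `σ'` of the Type S' curve `E = V(x) ∪ V(x² - λyz)`, described on
(representing vectors of) points: `σ'(0:b:c) = (0:b:αc)` on the line and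
`σ'(a:b:c) = (a:αb:α⁻¹c)` on the conic. -/
def sAct {k : Type} [Field k] (α : k) (v : Fin 3 → k) : Fin 3 → k :=
  if v 0 = 0 then ![0, v 1, α * v 2] else ![v 0, α * v 1, α⁻¹ * v 2]

/-- `(σ')^i` extends to an automorphism of `ℙ²`, i.e. there is a linear automorphism of `ℙ²`
agreeing with `(σ')^i` on all points of `E = V(x) ∪ V(x² - λyz)` (with `λ = (α³-1)/α`). -/
def extendsToP2 {k : Type} [Field k] (α : k) (i : ℕ) : Prop :=
  ∃ M : GL (Fin 3) k, ∀ v : Fin 3 → k, v ≠ 0 →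
    (v 0 = 0 ∨ (v 0) ^ 2 = ((α ^ 3 - 1) / α) * (v 1) * (v 2)) →
      ∃ c : k, c ≠ 0 ∧ (M : Matrix (Fin 3) (Fin 3) k).mulVec v = c • ((sAct α)^[i] v)

/-
On the line `x = 0` the iterate `(σ')ⁱ` is `(0:b:c) ↦ (0:b:αⁱc)` and on the conic it is
`(a:b:c) ↦ (a:αⁱb:α⁻ⁱc)`. The diagonal matrix `diag(1, αⁱ, α²ⁱ)` induces both as soon as
`α³ⁱ = 1`, since then `α²ⁱ = α⁻ⁱ`. Conversely, if a matrix `M` induces `(σ')ⁱ` on `E`, its values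
at `(0:1:0)`, `(0:0:1)`, `(0:1:1)` show that it acts on the whole line as `c (σ')ⁱ` for a single
scalar `c`; its values at the conic points `(λ:λ:1)` and `(λα:λα²:1)`, distinct as `α ≠ 1`, then
give `c = d αⁱ` and `c αⁱ = d α⁻ⁱ`, hence `α³ⁱ = 1`.
-/

open Function Matrix

theorem orderOf_eq_sInf_pow_eq_one {G : Type*} [Monoid G] (x : G) :
    orderOf x = sInf {n : ℕ | 1 ≤ n ∧ x ^ n = 1} := by
  rw [orderOf, minimalPeriod_eq_sInf_n_pos_IsPeriodicPt]
  simp only [isPeriodicPt_mul_iff_pow_eq_one, Nat.one_le_iff_ne_zero, Nat.pos_iff_ne_zero]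

theorem Matrix.mulVec_vecCons_three {R : Type*} [CommRing R] (M : Matrix (Fin 3) (Fin 3) R)
    (a b c : R) (j : Fin 3) : (M *ᵥ ![a, b, c]) j = M j 0 * a + M j 1 * b + M j 2 * c := by
  simp [mulVec, dotProduct, Fin.sum_univ_three]

section

variable {k : Type} [Field k]

theorem sAct_iterate_of_eq_zero (α : k) {v : Fin 3 → k} (hv : v 0 = 0) (i : ℕ) :
    (sAct α)^[i] v = ![0, v 1, α ^ i * v 2] := by
  induction i with
  | zero => ext j; fin_cases j <;> simp [hv]
  | succ n ih =>
    rw [iterate_succ_apply', ih]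
    ext j; fin_cases j <;> simp [sAct, pow_succ', mul_assoc]

theorem sAct_iterate_of_ne_zero (α : k) {v : Fin 3 → k} (hv : v 0 ≠ 0) (i : ℕ) :
    (sAct α)^[i] v = ![v 0, α ^ i * v 1, α⁻¹ ^ i * v 2] := by
  induction i with
  | zero => ext j; fin_cases j <;> simp
  | succ n ih =>
    rw [iterate_succ_apply', ih]
    ext j; fin_cases j <;> simp [sAct, hv, pow_succ', mul_assoc]

variable {α : k}

/-- `M` induces `(σ')ⁱ`, up to scalars, on the curve `V(x) ∪ V(x² - l yz)`, i.e. `l` is `λ`. -/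
def InducesIterate (α l : k) (i : ℕ) (M : Matrix (Fin 3) (Fin 3) k) : Prop :=
  ∀ v : Fin 3 → k, v ≠ 0 → (v 0 = 0 ∨ v 0 ^ 2 = l * v 1 * v 2) →
    ∃ c : k, c ≠ 0 ∧ M *ᵥ v = c • (sAct α)^[i] v

theorem inducesIterate_diagonal (l : k) {i : ℕ} (h : α ^ (3 * i) = 1) :
    InducesIterate α l i (diagonal ![1, α ^ i, α ^ (2 * i)]) := by
  have hmul : α ^ i * α ^ (2 * i) = 1 := by rw [← pow_add, ← h]; ring_nf
  have hinv : α ^ (2 * i) = α⁻¹ ^ i := by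
    rw [inv_pow]; exact eq_inv_of_mul_eq_one_right hmul
  intro v _ _
  by_cases h0 : v 0 = 0
  · refine ⟨α ^ i, left_ne_zero_of_mul_eq_one hmul, ?_⟩
    rw [sAct_iterate_of_eq_zero α h0]
    ext j; fin_cases j <;> simp [mulVec_diagonal, h0, two_mul, pow_add, mul_assoc]
  · refine ⟨1, one_ne_zero, ?_⟩
    rw [sAct_iterate_of_ne_zero α h0]
    ext j; fin_cases j <;> simp [mulVec_diagonal, hinv]

theorem extendsToP2_of_pow_eq_one {i : ℕ} (h : α ^ (3 * i) = 1) : extendsToP2 α i := by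
  have hdet : (diagonal ![1, α ^ i, α ^ (2 * i)]).det = α ^ (3 * i) := by
    simp [det_diagonal, Fin.prod_univ_three, ← pow_add]; ring_nf
  refine ⟨.mkOfDetNeZero (diagonal ![1, α ^ i, α ^ (2 * i)]) ?_, inducesIterate_diagonal _ h⟩
  rw [hdet, h]
  exact one_ne_zero

namespace InducesIterate

variable {l : k} {i : ℕ} {M : Matrix (Fin 3) (Fin 3) k}

theorem line_eqs (h : InducesIterate α l i M) (b z : k) (hbz : ![0, b, z] ≠ 0) :
    ∃ c, M 0 1 * b + M 0 2 * z = 0 ∧ M 1 1 * b + M 1 2 * z = c * b ∧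
      M 2 1 * b + M 2 2 * z = c * (α ^ i * z) := by
  obtain ⟨c, -, e⟩ := h _ hbz (Or.inl rfl)
  rw [sAct_iterate_of_eq_zero α rfl] at e
  exact ⟨c, by simpa [mulVec_vecCons_three] using congrFun e 0,
    by simpa [mulVec_vecCons_three] using congrFun e 1,
    by simpa [mulVec_vecCons_three] using congrFun e 2⟩

theorem conic_eqs (h : InducesIterate α l i M) (hl : l ≠ 0) {t : k} (ht : t ≠ 0) :
    ∃ d ≠ 0, M 0 0 * (l * t) + M 0 1 * (l * t ^ 2) + M 0 2 = d * (l * t) ∧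
      M 1 0 * (l * t) + M 1 1 * (l * t ^ 2) + M 1 2 = d * (α ^ i * (l * t ^ 2)) ∧
      M 2 0 * (l * t) + M 2 1 * (l * t ^ 2) + M 2 2 = d * (α ^ i)⁻¹ := by
  have h0 : l * t ≠ 0 := mul_ne_zero hl ht
  obtain ⟨d, hd, e⟩ := h ![l * t, l * t ^ 2, 1] (fun e => h0 (congrFun e 0))
    (Or.inr (by simp; ring))
  rw [sAct_iterate_of_ne_zero α h0] at e
  exact ⟨d, hd, by simpa [mulVec_vecCons_three] using congrFun e 0,
    by simpa [mulVec_vecCons_three] using congrFun e 1,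
    by simpa [mulVec_vecCons_three] using congrFun e 2⟩

theorem pow_eq_one (h : InducesIterate α l i M) (hα : α ≠ 0) (hα1 : α ≠ 1) (hl : l ≠ 0) :
    α ^ (3 * i) = 1 := by
  obtain ⟨c₁, e₁₀, e₁₁, e₁₂⟩ := h.line_eqs 1 0 (fun e => by simpa using congrFun e 1)
  obtain ⟨c₂, e₂₀, e₂₁, e₂₂⟩ := h.line_eqs 0 1 (fun e => by simpa using congrFun e 2)
  obtain ⟨c₃, -, e₃₁, e₃₂⟩ := h.line_eqs 1 1 (fun e => by simpa using congrFun e 1)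
  obtain ⟨d₁, hd₁, f₁₀, f₁₁, f₁₂⟩ := h.conic_eqs hl one_ne_zero
  obtain ⟨d₂, -, f₂₀, f₂₁, f₂₂⟩ := h.conic_eqs hl hα
  have hα1' : α - 1 ≠ 0 := sub_ne_zero.2 hα1
  have hαi : α ^ i ≠ 0 := pow_ne_zero i hα
  have hd : d₂ = d₁ := by
    have : (l * α) * (d₂ - d₁) = 0 := by
      linear_combination α * f₁₀ - f₂₀ + (l * α ^ 2 - l * α) * e₁₀ + (1 - α) * e₂₀
    simpa [sub_eq_zero, hl, hα] using this
  have hM₂₀ : M 2 0 = 0 := by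
    have : (l * (α - 1)) * M 2 0 = 0 := by
      linear_combination f₂₂ - f₁₂ - (l * α ^ 2 - l) * e₁₂ + (α ^ i)⁻¹ * hd
    simpa [hl, hα1'] using this
  have hc₁ : c₁ = d₁ * α ^ i := by
    have : (l * α * (α - 1)) * (c₁ - d₁ * α ^ i) = 0 := by
      linear_combination f₂₁ - α * f₁₁ + (l * α - l * α ^ 2) * e₁₁ + (α - 1) * e₂₁ +
        α ^ i * l * α ^ 2 * hd
    simpa [sub_eq_zero, hl, hα, hα1'] using this
  have hc₂ : c₂ = c₁ := by
    have : c₂ * α ^ i = c₁ * α ^ i := by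
      linear_combination e₃₂ - e₁₂ - e₂₂ - α ^ i * (e₃₁ - e₁₁ - e₂₁)
    exact mul_right_cancel₀ hαi this
  have hc₂' : c₂ * α ^ i = d₁ * (α ^ i)⁻¹ := by
    linear_combination f₁₂ - l * hM₂₀ - l * e₁₂ - e₂₂
  rw [pow_mul']
  refine mul_left_cancel₀ hd₁ ?_
  linear_combination -(α ^ i) ^ 2 * (hc₁ + hc₂) + α ^ i * hc₂' + d₁ * mul_inv_cancel₀ hαi

end InducesIterate

theorem extendsToP2_iff (hα : α ≠ 0) (hα3 : α ^ 3 ≠ 1) {i : ℕ} :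
    extendsToP2 α i ↔ α ^ (3 * i) = 1 := by
  refine ⟨fun ⟨_, hM⟩ => InducesIterate.pow_eq_one hM hα ?_ ?_, extendsToP2_of_pow_eq_one⟩
  · rintro rfl; simp at hα3
  · exact div_ne_zero (sub_ne_zero.2 hα3) hα

end

theorem stmt15_general {k : Type} [Field k] (α : k)
    (hα : α ≠ 0) (hα3 : α ^ 3 ≠ 1) :
    (∀ i : ℕ, 1 ≤ i → (extendsToP2 α i ↔ α ^ (3 * i) = 1)) ∧
    sInf {i : ℕ | 1 ≤ i ∧ extendsToP2 α i} = orderOf (α ^ 3) := by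
  refine ⟨fun i _ => extendsToP2_iff hα hα3, ?_⟩
  simp_rw [extendsToP2_iff hα hα3, orderOf_eq_sInf_pow_eq_one, ← pow_mul]

theorem stmt15 {k : Type} [Field k] [IsAlgClosed k] [CharZero k] (α : k)
    (hα : α ≠ 0) (hα3 : α ^ 3 ≠ 1) :
    (∀ i : ℕ, 1 ≤ i → (extendsToP2 α i ↔ α ^ (3 * i) = 1)) ∧
    sInf {i : ℕ | 1 ≤ i ∧ extendsToP2 α i} = orderOf (α ^ 3) :=
  stmt15_general α hα hα3
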